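/- Let p, n ≥ 1, let S = (S_0, …, S_{2n}) be a truncated matrix moment sequence whose moment matrix M(n) is positive definite, and let t ∈ ℝ. For 0 ≤ i ≤ n let v_i denote the (n+1)p × p block column (S_i; S_{i+1}; …; S_{i+n}). Then the (n+1)p × np matrix with block columns v_1 − t·v_0, v_2 − t·v_1, …, v_n − t·v_{n−1} has rank np; consequently the (x−t)-localizing moment matrix H_{x−t}(n−1) satisfies rank H_{x−t}(n−1) ≥ (n−1)p. -/

import Mathlib

open Matrix

/-- The `n`-th truncated moment matrix. -/
def momentMatrix (p n : ℕ) (S : ℕ → Matrix (Fin p) (Fin p) ℝ) :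
    Matrix (Fin (n + 1) × Fin p) (Fin (n + 1) × Fin p) ℝ :=
  fun i j => S (i.1.1 + j.1.1) i.2 j.2

/-- The `(x - t)`-localizing moment matrix `H_{x-t}(n-1)` of size `np`. -/
def locMatrix (p n : ℕ) (t : ℝ) (S : ℕ → Matrix (Fin p) (Fin p) ℝ) :
    Matrix (Fin n × Fin p) (Fin n × Fin p) ℝ :=
  fun i j => S (i.1.1 + j.1.1 + 1) i.2 j.2 - t * S (i.1.1 + j.1.1) i.2 j.2

/-- The `(n+1)p × np` matrix whose block columns are
`v₁ - t·v₀, v₂ - t·v₁, …, vₙ - t·v_{n-1}`, where `vᵢ = (Sᵢ; S_{i+1}; …; S_{i+n})`. -/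
def shiftedTallMatrix (p n : ℕ) (t : ℝ) (S : ℕ → Matrix (Fin p) (Fin p) ℝ) :
    Matrix (Fin (n + 1) × Fin p) (Fin n × Fin p) ℝ :=
  fun i j => S (i.1.1 + j.1.1 + 1) i.2 j.2 - t * S (i.1.1 + j.1.1) i.2 j.2

/-!
The block column `v_{j+1} - t·v_j` is `M(n)` applied to the coefficient vector of `(x - t)·xʲ`,
so the tall matrix factors as `M(n) · (P ⊗ I_p)`, where `P` is the matrix of multiplication by
`x - t` from polynomials of degree `< n` to degree `≤ n`. `M(n)` is invertible and `P` has full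
column rank (without its first row it is unitriangular), whence rank `np`. For the localizing
matrix, the tall matrix of size `n - 1` is a block-column submatrix of `H_{x-t}(n-1)` and is built
from `M(n-1)`, a principal submatrix of `M(n)`.
-/

open scoped Kronecker

namespace Matrix

variable {R : Type*} [CommRing R]

def mulXSubC (m : ℕ) (t : R) : Matrix (Fin (m + 1)) (Fin m) R :=
  (1 : Matrix (Fin (m + 1)) (Fin (m + 1)) R).submatrix id Fin.succ -
    t • (1 : Matrix (Fin (m + 1)) (Fin (m + 1)) R).submatrix id Fin.castSucc

theorem det_mulXSubC_submatrix_succ (m : ℕ) (t : R) :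
    ((mulXSubC m t).submatrix Fin.succ id).det = 1 := by
  have hupper : ((mulXSubC m t).submatrix Fin.succ id).IsUpperTriangular := by
    intro i j (hij : j < i)
    have hij : (j : ℕ) < i := hij
    simp [mulXSubC, Fin.ext_iff, hij.ne', show (i : ℕ) + 1 ≠ j by omega]
  rw [det_of_isUpperTriangular hupper]
  simp [mulXSubC, one_apply, Fin.ext_iff]

theorem rank_mulXSubC_kronecker_one [Nontrivial R] (m p : ℕ) (t : R) :
    (mulXSubC m t ⊗ₖ (1 : Matrix (Fin p) (Fin p) R)).rank = m * p := by
  refine le_antisymm ?_ ?_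
  · simpa using rank_le_card_width (mulXSubC m t ⊗ₖ (1 : Matrix (Fin p) (Fin p) R))
  · have hdet :
        ((mulXSubC m t).submatrix Fin.succ id ⊗ₖ (1 : Matrix (Fin p) (Fin p) R)).det = 1 := by
      rw [det_kronecker, det_mulXSubC_submatrix_succ, det_one, one_pow, one_pow, one_mul]
    have hrank := rank_of_isUnit _ ((isUnit_iff_isUnit_det _).2 (hdet ▸ isUnit_one))
    rw [Fintype.card_prod, Fintype.card_fin, Fintype.card_fin] at hrank
    rw [← hrank, kroneckerMap_submatrix_left]
    exact rank_submatrix_le _ _ _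

end Matrix

theorem momentMatrix_mul_mulXSubC_kronecker (p m : ℕ) (t : ℝ)
    (S : ℕ → Matrix (Fin p) (Fin p) ℝ) :
    momentMatrix p m S * (mulXSubC m t ⊗ₖ (1 : Matrix (Fin p) (Fin p) ℝ)) =
      shiftedTallMatrix p m t S := by
  ext ⟨i, r⟩ ⟨j, q⟩
  simp [mul_apply, Fintype.sum_prod_type, mulXSubC, one_apply, momentMatrix, shiftedTallMatrix,
    mul_sub, Finset.sum_sub_distrib, Finset.sum_ite_eq', add_assoc, mul_comm]

theorem rank_shiftedTallMatrix {p m : ℕ} {S : ℕ → Matrix (Fin p) (Fin p) ℝ}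
    (hM : (momentMatrix p m S).PosDef) (t : ℝ) : (shiftedTallMatrix p m t S).rank = m * p := by
  rw [← momentMatrix_mul_mulXSubC_kronecker,
    rank_mul_eq_right_of_det_ne_zero _ _ hM.det_pos.ne', rank_mulXSubC_kronecker_one]

theorem momentMatrix_submatrix_castSucc (p m : ℕ) (S : ℕ → Matrix (Fin p) (Fin p) ℝ) :
    (momentMatrix p (m + 1) S).submatrix (Prod.map Fin.castSucc id) (Prod.map Fin.castSucc id) =
      momentMatrix p m S :=
  rfl

theorem locMatrix_submatrix_castSucc (p m : ℕ) (t : ℝ) (S : ℕ → Matrix (Fin p) (Fin p) ℝ) :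
    (locMatrix p (m + 1) t S).submatrix id (Prod.map Fin.castSucc id) =
      shiftedTallMatrix p m t S :=
  rfl

theorem shiftedTallMatrix_rank_and_locMatrix_rank_general (p n : ℕ)
    (S : ℕ → Matrix (Fin p) (Fin p) ℝ)
    (hM : (momentMatrix p n S).PosDef) (t : ℝ) :
    (shiftedTallMatrix p n t S).rank = n * p ∧
      (n - 1) * p ≤ (locMatrix p n t S).rank := by
  refine ⟨rank_shiftedTallMatrix hM t, ?_⟩
  rcases n with _ | m
  · simp
  have hM' : (momentMatrix p m S).PosDef := by
    rw [← momentMatrix_submatrix_castSucc]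
    exact hM.submatrix ((Fin.castSucc_injective _).prodMap Function.injective_id)
  calc (m + 1 - 1) * p = (shiftedTallMatrix p m t S).rank := by
        rw [rank_shiftedTallMatrix hM', Nat.add_sub_cancel]
    _ ≤ (locMatrix p (m + 1) t S).rank := by
        rw [← locMatrix_submatrix_castSucc]
        exact rank_submatrix_le _ _ _

/-- If `M(n)` is positive definite, the matrix with block columns
`v₁ - t·v₀, …, vₙ - t·v_{n-1}` has rank `np`; consequently
`rank H_{x-t}(n-1) ≥ (n-1)p`. -/
theorem shiftedTallMatrix_rank_and_locMatrix_rank (p n : ℕ) (hp : 1 ≤ p) (hn : 1 ≤ n)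
    (S : ℕ → Matrix (Fin p) (Fin p) ℝ)
    (hSsym : ∀ i ≤ 2 * n, (S i).IsSymm)
    (hM : (momentMatrix p n S).PosDef) (t : ℝ) :
    (shiftedTallMatrix p n t S).rank = n * p ∧
      (n - 1) * p ≤ (locMatrix p n t S).rank :=
  shiftedTallMatrix_rank_and_locMatrix_rank_general p n S hM t
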